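/- arXiv:1406.4571 — 3 statements merged into one kernel-verified Lean document; each statement's English description precedes it below -/
import Mathlib

section
/- Let Ω ⊂ ℝ² be a bounded measurable set, a ∈ ℝ, c > 0, and L1, L2, L3, L4 real with L1 + L2 > 0 and L1 + L3 > 0; set ν = min{L1 + L2, L1 + L3}. Let Q : Ω → S^(2) be continuously differentiable with |∇Q| square-integrable on Ω, and suppose |Q(x)| ≤ M for all x ∈ Ω, where M ≥ 0 satisfies ν − |L4| M > 0. Then the Landau–de Gennes energy satisfies E[Q] ≥ (ν − |L4| M) ∫_Ω |∇Q|² dx − (a²/(4c)) |Ω|, where |Ω| is the Lebesgue measure of Ω. -/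
open MeasureTheory Set

noncomputable section

/-- The plane `ℝ²`. -/
abbrev E2 := EuclideanSpace ℝ (Fin 2)

/-- Partial derivative `∂_k f` of a scalar function on `ℝ²`. -/
noncomputable def pd (k : Fin 2) (f : E2 → ℝ) (x : E2) : ℝ :=
  fderiv ℝ f x (EuclideanSpace.single k 1)

/-- Frobenius norm `|M| = √(∑ M_{ij}²)` of a real 2×2 matrix. -/
noncomputable def fnorm (M : Matrix (Fin 2) (Fin 2) ℝ) : ℝ :=
  Real.sqrt (∑ i, ∑ j, (M i j) ^ 2)

/-- `|∇Q|² = ∑_{k,i,j} (∂_k Q_{ij})²`. -/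
noncomputable def gradsq (Q : E2 → Matrix (Fin 2) (Fin 2) ℝ) (x : E2) : ℝ :=
  ∑ k, ∑ i, ∑ j, (pd k (fun y => Q y i j) x) ^ 2

/-- The 2D Landau–de Gennes energy density
`L1|∇Q|² + L2 ∂_jQ_{ik}∂_kQ_{ij} + L3 ∂_jQ_{ij}∂_kQ_{ik}
  + L4 Q_{lk}∂_kQ_{ij}∂_lQ_{ij} + (a/2)tr(Q²) + (c/4)(tr(Q²))²`. -/
noncomputable def ldgDensity (a c L1 L2 L3 L4 : ℝ)
    (Q : E2 → Matrix (Fin 2) (Fin 2) ℝ) (x : E2) : ℝ :=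
  L1 * gradsq Q x
  + L2 * (∑ i, ∑ j, ∑ k, pd j (fun y => Q y i k) x * pd k (fun y => Q y i j) x)
  + L3 * (∑ i, (∑ j, pd j (fun y => Q y i j) x) * (∑ k, pd k (fun y => Q y i k) x))
  + L4 * (∑ l, ∑ k, Q x l k *
      (∑ i, ∑ j, pd k (fun y => Q y i j) x * pd l (fun y => Q y i j) x))
  + a / 2 * (Q x * Q x).trace
  + c / 4 * ((Q x * Q x).trace) ^ 2

/-!
In two dimensions a symmetric traceless matrix has the form `!![p, q; q, -p]`. The relations
`Q₁₀ = Q₀₁` and `Q₁₁ = -Q₀₀` hold only on `Ω`, which need not be open; but `Ω` has a full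
tangent cone at each of its Lebesgue density points, so the derivatives of two functions that
agree on `Ω` agree almost everywhere on `Ω`, and almost every `∂ₖQ` is again of that form. For such
gradients the `L2` and `L3` terms are `|∇Q|²/2 ∓ J` with a Jacobian `J` satisfying
`|J| ≤ |∇Q|²/2`, which gives `ν|∇Q|²`; the `L4` term is `tr (Q A)` for the Gram matrix `A` of
`(∂₀Q, ∂₁Q)`, bounded by `|Q| tr A = |Q| |∇Q|²`; and the bulk term is a quadratic in `tr (Q²)`
with minimum `-a²/(4c)`. Integrating this pointwise bound over `Ω` gives the theorem.
-/

open Filter Topology Metric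

section

variable {E : Type*} [NormedAddCommGroup E] [NormedSpace ℝ E]

theorem mem_tangentConeAt_of_eventually_inter_closedBall_nonempty {s : Set E} {x v : E}
    (h : ∀ ε > 0, ∀ᶠ r in 𝓝[>] (0 : ℝ), (s ∩ closedBall (x + r • v) (ε * r)).Nonempty) :
    v ∈ tangentConeAt ℝ s x := by
  simp only [tangentConeAt_eq_biInter_closure, mem_iInter₂, Metric.mem_closure_iff]
  intro U hU ε hε
  obtain ⟨ρ, hρ, hρU⟩ := Metric.mem_nhds_iff.1 hU
  have hsmall : ∀ᶠ r in 𝓝[>] (0 : ℝ), r * (‖v‖ + ε) < ρ := nhdsWithin_le_nhds <|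
    ((continuous_mul_const _).tendsto' 0 0 (zero_mul _)).eventually (gt_mem_nhds hρ)
  obtain ⟨r, ⟨y, hys, hyv⟩, hrρ, (hr : 0 < r)⟩ :=
    ((h (ε / 2) (half_pos hε)).and (hsmall.and self_mem_nhdsWithin)).exists
  rw [mem_closedBall, dist_eq_norm] at hyv
  refine ⟨r⁻¹ • (y - x),
    mem_smul.2 ⟨r⁻¹, mem_univ _, y - x, ⟨hρU ?_, by simpa using hys⟩, rfl⟩, ?_⟩
  · rw [mem_ball_zero_iff]
    calc ‖y - x‖ = ‖(y - (x + r • v)) + r • v‖ := by congr 1; abel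
      _ ≤ ε / 2 * r + r * ‖v‖ := by
        grw [norm_add_le, norm_smul, Real.norm_of_nonneg hr.le, hyv]
      _ < ρ := by nlinarith
  · rw [dist_eq_norm]
    calc ‖v - r⁻¹ • (y - x)‖ = r⁻¹ * ‖y - (x + r • v)‖ := by
          have : v - r⁻¹ • (y - x) = r⁻¹ • ((x + r • v) - y) := by
            rw [smul_sub r⁻¹ (x + r • v), smul_add, smul_smul, inv_mul_cancel₀ hr.ne', one_smul,
              smul_sub]
            abel
          rw [this, norm_smul, norm_inv, Real.norm_of_nonneg hr.le, norm_sub_rev]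
      _ ≤ r⁻¹ * (ε / 2 * r) := by gcongr
      _ < ε := by field_simp; linarith

variable [FiniteDimensional ℝ E] [MeasurableSpace E] [BorelSpace E]
  (μ : Measure E) [μ.IsAddHaarMeasure]

theorem ae_restrict_eventually_measure_inter_closedBall_ne_zero (s : Set E) :
    ∀ᵐ x ∂μ.restrict s, ∀ v : E, ∀ ε > 0,
      ∀ᶠ r in 𝓝[>] (0 : ℝ), μ (s ∩ closedBall (x + r • v) (ε * r)) ≠ 0 := by
  have hdensity := ae_all_iff.2 fun n : ℕ =>
    IsUnifLocDoublingMeasure.ae_tendsto_measure_inter_div μ s n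
  filter_upwards [hdensity] with x hx v ε hε
  -- the balls `closedBall (x + r • v) (ε * r)` need not contain `x`, but their dilates by `n` do
  obtain ⟨n, hn⟩ := exists_nat_ge (‖v‖ / ε)
  have hδ : Tendsto (fun r : ℝ => ε * r) (𝓝[>] 0) (𝓝[>] 0) :=
    tendsto_iff_comap.2 (comap_mulLeft_nhdsGT_zero hε).ge
  have hx_mem : ∀ᶠ r in 𝓝[>] (0 : ℝ), x ∈ closedBall (x + r • v) (n * (ε * r)) := by
    filter_upwards [self_mem_nhdsWithin] with r (hr : 0 < r)
    rw [mem_closedBall, dist_comm, dist_self_add_left, norm_smul, Real.norm_of_nonneg hr.le]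
    rw [div_le_iff₀ hε] at hn
    nlinarith
  filter_upwards [(hx n _ _ hδ hx_mem).eventually_ne one_ne_zero] with r hr h0
  simp [h0] at hr

theorem ae_restrict_uniqueDiffWithinAt (s : Set E) :
    ∀ᵐ x ∂μ.restrict s, UniqueDiffWithinAt ℝ s x := by
  filter_upwards [ae_restrict_eventually_measure_inter_closedBall_ne_zero μ s] with x hx
  have hcone : tangentConeAt ℝ s x = univ := eq_univ_of_forall fun v =>
    mem_tangentConeAt_of_eventually_inter_closedBall_nonempty fun ε hε =>
      (hx v ε hε).mono fun _ => nonempty_of_measure_ne_zero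
  refine ⟨?_, mem_closure_of_nonempty_tangentConeAt (hcone ▸ univ_nonempty)⟩
  rw [hcone, Submodule.span_univ, Submodule.top_coe]
  exact dense_univ

theorem ae_restrict_fderiv_eq_of_eqOn {F : Type*} [NormedAddCommGroup F] [NormedSpace ℝ F]
    {s : Set E} (hs : MeasurableSet s) {f g : E → F} (hf : ∀ x ∈ s, DifferentiableAt ℝ f x)
    (hg : ∀ x ∈ s, DifferentiableAt ℝ g x) (hfg : EqOn f g s) :
    ∀ᵐ x ∂μ.restrict s, fderiv ℝ f x = fderiv ℝ g x := by
  filter_upwards [ae_restrict_uniqueDiffWithinAt μ s, ae_restrict_mem hs] with x hx hxs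
  exact hx.eq (hf x hxs).hasFDerivAt.hasFDerivWithinAt
    ((hg x hxs).hasFDerivAt.hasFDerivWithinAt.congr hfg (hfg hxs))

end

theorem pd_neg (k : Fin 2) (f : E2 → ℝ) (x : E2) : pd k (fun y => -f y) x = -pd k f x := by
  simp [pd]

theorem ae_restrict_pd_eq_of_eqOn {s : Set E2} (hs : MeasurableSet s) {f g : E2 → ℝ}
    (hf : Differentiable ℝ f) (hg : Differentiable ℝ g) (hfg : EqOn f g s) :
    ∀ᵐ x ∂volume.restrict s, ∀ k, pd k f x = pd k g x := by
  filter_upwards [ae_restrict_fderiv_eq_of_eqOn volume hs (fun x _ => hf x) (fun x _ => hg x)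
    hfg] with x hx k
  rw [pd, pd, hx]

theorem continuous_pd {f : E2 → ℝ} (hf : ContDiff ℝ 1 f) (k : Fin 2) : Continuous (pd k f) :=
  (hf.continuous_fderiv one_ne_zero).clm_apply continuous_const

theorem continuous_ldgDensity (a c L1 L2 L3 L4 : ℝ) {Q : E2 → Matrix (Fin 2) (Fin 2) ℝ}
    (hQ : ∀ i j, ContDiff ℝ 1 (fun x => Q x i j)) :
    Continuous (ldgDensity a c L1 L2 L3 L4 Q) := by
  have hpd k i j : Continuous (pd k fun y => Q y i j) := continuous_pd (hQ i j) k
  have hQc : Continuous Q := continuous_pi fun i => continuous_pi fun j => (hQ i j).continuous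
  unfold ldgDensity gradsq
  fun_prop

theorem Matrix.apply_one_one_eq_neg_of_trace_eq_zero {R : Type*} [AddCommGroup R]
    {A : Matrix (Fin 2) (Fin 2) R} (h : A.trace = 0) : A 1 1 = -A 0 0 :=
  eq_neg_of_add_eq_zero_right ((Matrix.trace_fin_two A).symm.trans h)

theorem fnorm_eq_of_isSymm_of_trace_eq_zero {A : Matrix (Fin 2) (Fin 2) ℝ} (hs : A.IsSymm)
    (ht : A.trace = 0) :
    fnorm A = √(2 * (A 0 0 ^ 2 + A 0 1 ^ 2)) := by
  rw [fnorm, Fin.sum_univ_two, Fin.sum_univ_two, Fin.sum_univ_two, hs.apply 0 1,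
    Matrix.apply_one_one_eq_neg_of_trace_eq_zero ht]
  ring_nf

theorem abs_two_mul_sub_le_sum_sq (u0 u1 v0 v1 : ℝ) :
    |2 * (u0 * v1 - u1 * v0)| ≤ u0 ^ 2 + u1 ^ 2 + v0 ^ 2 + v1 ^ 2 :=
  abs_le.2 ⟨by nlinarith [sq_nonneg (u0 + v1), sq_nonneg (u1 - v0)],
    by nlinarith [sq_nonneg (u0 - v1), sq_nonneg (u1 + v0)]⟩

theorem abs_mul_sub_add_two_mul_le (p q a b d : ℝ) (ha : 0 ≤ a) (hd : 0 ≤ d)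
    (hb : b ^ 2 ≤ a * d) :
    |p * (a - d) + 2 * q * b| ≤ √(p ^ 2 + q ^ 2) * (a + d) := by
  apply abs_le_of_sq_le_sq _ (by positivity)
  rw [mul_pow, Real.sq_sqrt (by positivity)]
  nlinarith [sq_nonneg (p * 2 * b - q * (a - d)), sq_nonneg p, sq_nonneg q]

theorem neg_sq_div_le_add_mul_sq {a c : ℝ} (hc : 0 < c) (t : ℝ) :
    -(a ^ 2 / (4 * c)) ≤ a / 2 * t + c / 4 * t ^ 2 := by
  have hsq : a / 2 * t + c / 4 * t ^ 2 + a ^ 2 / (4 * c) = (c * t + a) ^ 2 / (4 * c) := by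
    field_simp; ring
  nlinarith [div_nonneg (sq_nonneg (c * t + a)) (by linarith : (0:ℝ) ≤ 4 * c)]

section Pointwise

variable {Q : E2 → Matrix (Fin 2) (Fin 2) ℝ} {x : E2}

def crossGrad (Q : E2 → Matrix (Fin 2) (Fin 2) ℝ) (x : E2) : ℝ :=
  ∑ i, ∑ j, ∑ k, pd j (fun y => Q y i k) x * pd k (fun y => Q y i j) x

def divSq (Q : E2 → Matrix (Fin 2) (Fin 2) ℝ) (x : E2) : ℝ :=
  ∑ i, (∑ j, pd j (fun y => Q y i j) x) * (∑ k, pd k (fun y => Q y i k) x)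

def cubicGrad (Q : E2 → Matrix (Fin 2) (Fin 2) ℝ) (x : E2) : ℝ :=
  ∑ l, ∑ k, Q x l k * (∑ i, ∑ j, pd k (fun y => Q y i j) x * pd l (fun y => Q y i j) x)

theorem ldgDensity_eq (a c L1 L2 L3 L4 : ℝ) :
    ldgDensity a c L1 L2 L3 L4 Q x =
      L1 * gradsq Q x + L2 * crossGrad Q x + L3 * divSq Q x + L4 * cubicGrad Q x
        + (a / 2 * (Q x * Q x).trace + c / 4 * ((Q x * Q x).trace) ^ 2) := by
  rw [ldgDensity, add_assoc]
  rfl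

theorem mul_gradsq_le_elastic {L1 L2 L3 ν : ℝ} (h2 : ν ≤ L1 + L2) (h3 : ν ≤ L1 + L3)
    (hdsym : ∀ k, pd k (fun y => Q y 1 0) x = pd k (fun y => Q y 0 1) x)
    (hdtr : ∀ k, pd k (fun y => Q y 1 1) x = -pd k (fun y => Q y 0 0) x) :
    ν * gradsq Q x ≤ L1 * gradsq Q x + L2 * crossGrad Q x + L3 * divSq Q x := by
  have hJ := abs_le.1 <| abs_two_mul_sub_le_sum_sq
    (pd 0 (fun y => Q y 0 0) x) (pd 1 (fun y => Q y 0 0) x)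
    (pd 0 (fun y => Q y 0 1) x) (pd 1 (fun y => Q y 0 1) x)
  simp only [gradsq, crossGrad, divSq, Fin.sum_univ_two, hdsym, hdtr]
  nlinarith [mul_nonneg (sub_nonneg.2 h2) (neg_le_iff_add_nonneg.1 hJ.1),
    mul_nonneg (sub_nonneg.2 h3) (sub_nonneg.2 hJ.2)]

theorem neg_mul_gradsq_le_cubicGrad {L4 M : ℝ} (hs : (Q x).IsSymm) (ht : (Q x).trace = 0)
    (hM : fnorm (Q x) ≤ M) : -(|L4| * M * gradsq Q x) ≤ L4 * cubicGrad Q x := by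
  set g : Fin 2 → Fin 2 → Fin 2 → ℝ := fun k i j => pd k (fun y => Q y i j) x with hg
  set A : Fin 2 → Fin 2 → ℝ := fun k l => ∑ i, ∑ j, g k i j * g l i j with hA
  have hcubic : cubicGrad Q x = Q x 0 0 * (A 0 0 - A 1 1) + 2 * Q x 0 1 * A 0 1 := by
    simp only [cubicGrad, hA, hg, Fin.sum_univ_two, hs.apply 0 1,
      Matrix.apply_one_one_eq_neg_of_trace_eq_zero ht]
    ring
  have hgrad : gradsq Q x = A 0 0 + A 1 1 := by
    simp only [gradsq, hA, hg, Fin.sum_univ_two]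
    ring
  have hA_nonneg (k : Fin 2) : 0 ≤ A k k :=
    Finset.sum_nonneg fun _ _ => Finset.sum_nonneg fun _ _ => mul_self_nonneg _
  have hCS : A 0 1 ^ 2 ≤ A 0 0 * A 1 1 := by
    simp only [hA, Fin.sum_univ_two]
    nlinarith [sq_nonneg (g 0 0 0 * g 1 0 1 - g 0 0 1 * g 1 0 0),
      sq_nonneg (g 0 0 0 * g 1 1 0 - g 0 1 0 * g 1 0 0),
      sq_nonneg (g 0 0 0 * g 1 1 1 - g 0 1 1 * g 1 0 0),
      sq_nonneg (g 0 0 1 * g 1 1 0 - g 0 1 0 * g 1 0 1),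
      sq_nonneg (g 0 0 1 * g 1 1 1 - g 0 1 1 * g 1 0 1),
      sq_nonneg (g 0 1 0 * g 1 1 1 - g 0 1 1 * g 1 1 0)]
  have hsqrt : √(Q x 0 0 ^ 2 + Q x 0 1 ^ 2) ≤ M := by
    rw [fnorm_eq_of_isSymm_of_trace_eq_zero hs ht] at hM
    exact (Real.sqrt_le_sqrt (by nlinarith [sq_nonneg (Q x 0 0), sq_nonneg (Q x 0 1)])).trans hM
  have hbound : |cubicGrad Q x| ≤ M * gradsq Q x := by
    rw [hcubic, hgrad]
    exact (abs_mul_sub_add_two_mul_le _ _ _ _ _ (hA_nonneg 0) (hA_nonneg 1) hCS).trans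
      (mul_le_mul_of_nonneg_right hsqrt (add_nonneg (hA_nonneg 0) (hA_nonneg 1)))
  calc -(|L4| * M * gradsq Q x) ≤ -(|L4| * |cubicGrad Q x|) := by
        rw [mul_assoc]; exact neg_le_neg (mul_le_mul_of_nonneg_left hbound (abs_nonneg L4))
    _ ≤ L4 * cubicGrad Q x := by rw [← abs_mul]; exact neg_abs_le _

theorem le_ldgDensity {a c L1 L2 L3 L4 ν M : ℝ} (hc : 0 < c) (h2 : ν ≤ L1 + L2)
    (h3 : ν ≤ L1 + L3) (hs : (Q x).IsSymm) (ht : (Q x).trace = 0)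
    (hdsym : ∀ k, pd k (fun y => Q y 1 0) x = pd k (fun y => Q y 0 1) x)
    (hdtr : ∀ k, pd k (fun y => Q y 1 1) x = -pd k (fun y => Q y 0 0) x)
    (hM : fnorm (Q x) ≤ M) :
    (ν - |L4| * M) * gradsq Q x - a ^ 2 / (4 * c) ≤ ldgDensity a c L1 L2 L3 L4 Q x := by
  rw [ldgDensity_eq]
  linarith [mul_gradsq_le_elastic h2 h3 hdsym hdtr,
    neg_mul_gradsq_le_cubicGrad (L4 := L4) hs ht hM,
    neg_sq_div_le_add_mul_sq (a := a) hc ((Q x * Q x).trace)]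

end Pointwise

theorem energy_lower_bound_general
    (Ω : Set E2) (hΩm : MeasurableSet Ω) (hΩb : Bornology.IsBounded Ω)
    (a c L1 L2 L3 L4 : ℝ) (hc : 0 < c)
    (ν : ℝ) (hν : ν = min (L1 + L2) (L1 + L3))
    (M : ℝ)
    (Q : E2 → Matrix (Fin 2) (Fin 2) ℝ)
    -- `Q` takes values in `S^(2)` and is continuously differentiable
    (hQsymm : ∀ x ∈ Ω, (Q x).IsSymm) (hQtr : ∀ x ∈ Ω, (Q x).trace = 0)
    (hQc1 : ∀ i j : Fin 2, ContDiff ℝ 1 (fun x => Q x i j))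
    -- `|∇Q|` is square integrable on `Ω`
    (hgrad : IntegrableOn (fun x => gradsq Q x) Ω volume)
    -- pointwise bound `|Q| ≤ M` on `Ω`
    (hQbound : ∀ x ∈ Ω, fnorm (Q x) ≤ M) :
    (∫ x in Ω, ldgDensity a c L1 L2 L3 L4 Q x)
      ≥ (ν - |L4| * M) * (∫ x in Ω, gradsq Q x)
        - a ^ 2 / (4 * c) * (volume Ω).toReal := by
  have hd i j : Differentiable ℝ (fun x => Q x i j) := (hQc1 i j).differentiable one_ne_zero
  have hdsym := ae_restrict_pd_eq_of_eqOn hΩm (hd 1 0) (hd 0 1) fun x hx =>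
    (hQsymm x hx).apply 0 1
  have hdtr := ae_restrict_pd_eq_of_eqOn hΩm (hd 1 1) (hd 0 0).neg fun x hx =>
    Matrix.apply_one_one_eq_neg_of_trace_eq_zero (hQtr x hx)
  have hpointwise : ∀ᵐ x ∂volume.restrict Ω,
      (ν - |L4| * M) * gradsq Q x - a ^ 2 / (4 * c) ≤ ldgDensity a c L1 L2 L3 L4 Q x := by
    filter_upwards [ae_restrict_mem hΩm, hdsym, hdtr] with x hx hsym htr
    exact le_ldgDensity hc (hν ▸ min_le_left _ _) (hν ▸ min_le_right _ _) (hQsymm x hx)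
      (hQtr x hx) hsym (fun k => (htr k).trans (pd_neg k _ x)) (hQbound x hx)
  have hvol : volume Ω ≠ ⊤ := hΩb.measure_lt_top.ne
  have hlower : IntegrableOn (fun x => (ν - |L4| * M) * gradsq Q x - a ^ 2 / (4 * c)) Ω :=
    (hgrad.const_mul _).sub (integrableOn_const hvol)
  have hdensity : IntegrableOn (ldgDensity a c L1 L2 L3 L4 Q) Ω :=
    ((continuous_ldgDensity a c L1 L2 L3 L4 hQc1).continuousOn.integrableOn_compact
      hΩb.isCompact_closure).mono_set subset_closure
  calc (ν - |L4| * M) * (∫ x in Ω, gradsq Q x) - a ^ 2 / (4 * c) * (volume Ω).toReal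
      = ∫ x in Ω, ((ν - |L4| * M) * gradsq Q x - a ^ 2 / (4 * c)) := by
        rw [integral_sub (hgrad.const_mul _) (integrableOn_const hvol), integral_const_mul,
          setIntegral_const, smul_eq_mul, measureReal_def, mul_comm (a ^ 2 / (4 * c))]
    _ ≤ ∫ x in Ω, ldgDensity a c L1 L2 L3 L4 Q x := integral_mono_ae hlower hdensity hpointwise

/-- lower bound for the Landau–de Gennes energy under an
`L^∞` bound: if `|Q| ≤ M` on `Ω` with `ν − |L4| M > 0`, then
`E[Q] ≥ (ν − |L4| M) ∫_Ω |∇Q|² − (a²/(4c))|Ω|`. -/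
theorem energy_lower_bound
    (Ω : Set E2) (hΩm : MeasurableSet Ω) (hΩb : Bornology.IsBounded Ω)
    (a c L1 L2 L3 L4 : ℝ) (hc : 0 < c)
    (h12 : 0 < L1 + L2) (h13 : 0 < L1 + L3)
    (ν : ℝ) (hν : ν = min (L1 + L2) (L1 + L3))
    (M : ℝ) (hM0 : 0 ≤ M) (hM : 0 < ν - |L4| * M)
    (Q : E2 → Matrix (Fin 2) (Fin 2) ℝ)
    -- `Q` takes values in `S^(2)` and is continuously differentiable
    (hQsymm : ∀ x ∈ Ω, (Q x).IsSymm) (hQtr : ∀ x ∈ Ω, (Q x).trace = 0)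
    (hQc1 : ∀ i j : Fin 2, ContDiff ℝ 1 (fun x => Q x i j))
    -- `|∇Q|` is square integrable on `Ω`
    (hgrad : IntegrableOn (fun x => gradsq Q x) Ω volume)
    -- pointwise bound `|Q| ≤ M` on `Ω`
    (hQbound : ∀ x ∈ Ω, fnorm (Q x) ≤ M) :
    (∫ x in Ω, ldgDensity a c L1 L2 L3 L4 Q x)
      ≥ (ν - |L4| * M) * (∫ x in Ω, gradsq Q x)
        - a ^ 2 / (4 * c) * (volume Ω).toReal :=
  energy_lower_bound_general Ω hΩm hΩb a c L1 L2 L3 L4 hc ν hν M Q hQsymm hQtr hQc1 hgrad hQbound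
end
end

section
/- Let a ∈ ℝ, b ≥ 0, c > 0 with b² − 24ac ≥ 0, and set s₊ = (b + √(b² − 24ac))/(4c). Let Q : [0,∞) → M₃(ℝ) be differentiable with Q(t) symmetric and traceless for every t, satisfying the ODE Q'(t) = −a Q(t) + b( Q(t)² − (tr(Q(t)²)/3) I ) − c tr(Q(t)²) Q(t). If |Q(0)|² ≤ (2/3) s₊², then |Q(t)|² ≤ (2/3) s₊² for all t ≥ 0. -/
/-!
Along the flow, `y = tr(Q²)` satisfies `y' = 2(-a y + b tr(Q³) - c y²)`. Writing `y = (2/3) σ²`,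
the bound `|tr(Q³)| ≤ y^{3/2}/√6` turns the right-hand side into at most
`-(4/9) σ² (2cσ² - bσ + 3a)`, and `s₊` is the larger root of `2cσ² - bσ + 3a`. Hence `y` decreases
wherever it exceeds `(2/3) s₊²`, so it can never cross that level.
-/

open Set

theorem Matrix.IsHermitian.trace_pow_eq_sum_eigenvalues_pow {𝕜 n : Type*} [RCLike 𝕜]
    [Fintype n] [DecidableEq n] {A : Matrix n n 𝕜} (hA : A.IsHermitian) (k : ℕ) :
    (A ^ k).trace = ∑ i, (hA.eigenvalues i : 𝕜) ^ k := by
  conv_lhs => rw [hA.spectral_theorem, ← map_pow, Unitary.conjStarAlgAut_apply,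
    Matrix.trace_mul_cycle, Unitary.coe_star_mul_self, one_mul, Matrix.diagonal_pow,
    Matrix.trace_diagonal]
  rfl

theorem sq_sum_cube_le_of_sum_eq_zero {x y z : ℝ} (h : x + y + z = 0) :
    6 * (x ^ 3 + y ^ 3 + z ^ 3) ^ 2 ≤ (x ^ 2 + y ^ 2 + z ^ 2) ^ 3 := by
  obtain rfl : z = -x - y := by linarith
  -- the discriminant of `(X - x)(X - y)(X - z)` is a perfect square
  have hdisc : (x ^ 2 + y ^ 2 + (-x - y) ^ 2) ^ 3 - 6 * (x ^ 3 + y ^ 3 + (-x - y) ^ 3) ^ 2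
      = 2 * ((x - y) * (x + 2 * y) * (2 * x + y)) ^ 2 := by ring
  linarith [sq_nonneg ((x - y) * (x + 2 * y) * (2 * x + y))]

theorem Matrix.IsSymm.sq_trace_pow_three_le {M : Matrix (Fin 3) (Fin 3) ℝ} (hM : M.IsSymm)
    (htr : M.trace = 0) : 6 * (M ^ 3).trace ^ 2 ≤ (M ^ 2).trace ^ 3 := by
  have hA : M.IsHermitian := hM
  simp only [hA.trace_pow_eq_sum_eigenvalues_pow, Fin.sum_univ_three, RCLike.ofReal_real_eq_id,
    id]
  rw [hA.trace_eq_sum_eigenvalues, Fin.sum_univ_three] at htr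
  exact sq_sum_cube_le_of_sum_eq_zero htr

theorem hasDerivWithinAt_trace_mul_self {n : Type*} [Fintype n] {Q : ℝ → Matrix n n ℝ}
    {Q' : Matrix n n ℝ} {s : Set ℝ} {t : ℝ}
    (hQ : ∀ i j, HasDerivWithinAt (fun u => Q u i j) (Q' i j) s t) :
    HasDerivWithinAt (fun u => (Q u * Q u).trace) (2 * (Q' * Q t).trace) s t := by
  have hsum : (fun u => (Q u * Q u).trace) = fun u => ∑ i, ∑ j, Q u i j * Q u j i := by
    ext u; simp [Matrix.trace, Matrix.mul_apply]
  rw [hsum]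
  refine (HasDerivWithinAt.fun_sum fun i _ => HasDerivWithinAt.fun_sum fun j _ =>
    (hQ i j).mul (hQ j i)).congr_deriv ?_
  rw [two_mul]
  nth_rw 2 [Matrix.trace_mul_comm]
  simp [Matrix.trace, Matrix.mul_apply, Finset.sum_add_distrib]

theorem image_le_of_deriv_right_nonpos_of_lt_image {f f' : ℝ → ℝ} {a b R : ℝ}
    (hf : ContinuousOn f (Icc a b)) (hf' : ∀ x ∈ Ico a b, HasDerivWithinAt f (f' x) (Ici x) x)
    (ha : f a ≤ R) (bound : ∀ x ∈ Ico a b, R < f x → f' x ≤ 0) :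
    ∀ ⦃x⦄, x ∈ Icc a b → f x ≤ R := by
  intro x hx
  -- compare with the barriers `R + ε (1 + (x - a))`, which `f` can only touch where `R < f`
  have barrier : ∀ ε > 0, f x ≤ R + ε * (1 + (x - a)) := fun ε hε =>
    image_le_of_deriv_right_lt_deriv_boundary hf hf' (by simpa using ha.trans (by linarith))
      (fun y => (((hasDerivAt_id y).sub_const a).const_add 1).const_mul ε |>.const_add R)
      (fun y hy hfy => by
        have hεy := mul_nonneg hε.le (sub_nonneg.2 hy.1)
        simp only [id] at hfy
        linarith [bound y hy (by linarith)]) hx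
  refine le_of_forall_pos_le_add fun δ hδ => ?_
  have hxa : 0 < 1 + (x - a) := by linarith [hx.1]
  simpa [div_mul_cancel₀ _ hxa.ne'] using barrier (δ / (1 + (x - a))) (by positivity)

theorem neg_mul_add_mul_sub_mul_sq_nonpos {a b c s y T : ℝ} (hb : 0 ≤ b) (hc : 0 ≤ c)
    (hroot : 2 * c * s ^ 2 - b * s + 3 * a = 0) (hs : b ≤ 4 * c * s) (hT : 6 * T ^ 2 ≤ y ^ 3)
    (hy : 2 / 3 * s ^ 2 < y) : -a * y + b * T - c * y ^ 2 ≤ 0 := by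
  -- write `y = (2/3) σ²`; then `T ≤ (2/9) σ³` and `2cσ² - bσ + 3a = (σ - s)(2c(σ + s) - b)`
  obtain ⟨σ, hσ, rfl⟩ : ∃ σ, 0 ≤ σ ∧ y = 2 / 3 * σ ^ 2 :=
    ⟨√(3 / 2 * y), Real.sqrt_nonneg _, by rw [Real.sq_sqrt (by nlinarith)]; ring⟩
  have hsσ : s < σ := by nlinarith [abs_lt_of_sq_lt_sq' (a := s) (b := σ) (by nlinarith) hσ]
  have hTσ : T ≤ 2 / 9 * σ ^ 3 := by nlinarith [pow_nonneg hσ 3]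
  have hfactor : 0 ≤ (σ - s) * (2 * c * (σ + s) - b) :=
    mul_nonneg (sub_nonneg.2 hsσ.le) (by nlinarith [mul_nonneg hc (sub_nonneg.2 hsσ.le)])
  nlinarith [mul_le_mul_of_nonneg_left hTσ hb, sq_nonneg σ]

noncomputable def bulkField (a b c : ℝ) (Q : Matrix (Fin 3) (Fin 3) ℝ) : Matrix (Fin 3) (Fin 3) ℝ :=
  -a • Q + b • (Q * Q - ((Q * Q).trace / 3) • 1) - (c * (Q * Q).trace) • Q

theorem bulkField_apply (a b c : ℝ) (Q : Matrix (Fin 3) (Fin 3) ℝ) (i j : Fin 3) :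
    bulkField a b c Q i j = -a * Q i j
      + b * ((Q * Q) i j - (Q * Q).trace / 3 * (if i = j then 1 else 0))
      - c * (Q * Q).trace * Q i j := by
  simp [bulkField, Matrix.one_apply]

theorem trace_bulkField_mul_self (a b c : ℝ) {Q : Matrix (Fin 3) (Fin 3) ℝ} (htr : Q.trace = 0) :
    (bulkField a b c Q * Q).trace
      = -a * (Q * Q).trace + b * (Q * Q * Q).trace - c * (Q * Q).trace ^ 2 := by
  simp [bulkField, Matrix.add_mul, Matrix.sub_mul, htr]
  ring

/-- 3D bulk ODE, preservation of the ball `|Q|² ≤ (2/3)s₊²`: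
with `s₊ = (b + √(b²−24ac))/(4c)`, if `|Q(0)|² ≤ (2/3)s₊²` then
`|Q(t)|² ≤ (2/3)s₊²` for all `t ≥ 0`, where `|Q|² = tr(Q²)`. -/
theorem bulk_ode_ball_preservation_3d
    (a b c s : ℝ) (hb : 0 ≤ b) (hc : 0 < c) (hdisc : 0 ≤ b ^ 2 - 24 * a * c)
    (hs : s = (b + Real.sqrt (b ^ 2 - 24 * a * c)) / (4 * c))
    (Q : ℝ → Matrix (Fin 3) (Fin 3) ℝ)
    (hsym : ∀ t, (Q t).IsSymm) (htr : ∀ t, (Q t).trace = 0)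
    (hode : ∀ t, 0 ≤ t → ∀ i j : Fin 3,
      HasDerivWithinAt (fun u => Q u i j)
        (-a * Q t i j
          + b * ((Q t * Q t) i j - (Q t * Q t).trace / 3 * (if i = j then 1 else 0))
          - c * (Q t * Q t).trace * Q t i j)
        (Ici 0) t)
    (hinit : (Q 0 * Q 0).trace ≤ 2 / 3 * s ^ 2) :
    ∀ t, 0 ≤ t → (Q t * Q t).trace ≤ 2 / 3 * s ^ 2 := by
  have hsqrt := Real.sqrt_nonneg (b ^ 2 - 24 * a * c)
  have hbs : b ≤ 4 * c * s := by
    rw [hs, mul_div_cancel₀ _ (by positivity)]; linarith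
  have hroot : 2 * c * s ^ 2 - b * s + 3 * a = 0 := by
    linear_combination (quadratic_eq_zero_iff (a := 2 * c) (b := -b) (c := 3 * a) (by positivity)
      (by rw [discrim, Real.mul_self_sqrt hdisc]; ring) s).2 (.inl (by rw [hs]; ring))
  have hy : ∀ u ∈ Ici (0 : ℝ), HasDerivWithinAt (fun u => (Q u * Q u).trace)
      (2 * (-a * (Q u * Q u).trace + b * (Q u * Q u * Q u).trace - c * (Q u * Q u).trace ^ 2))
      (Ici 0) u := fun u hu => by
    rw [← trace_bulkField_mul_self a b c (htr u)]
    exact hasDerivWithinAt_trace_mul_self fun i j => by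
      simpa only [bulkField_apply] using hode u hu i j
  intro t ht
  refine image_le_of_deriv_right_nonpos_of_lt_image
    (fun x hx => (hy x hx.1).continuousWithinAt.mono Icc_subset_Ici_self)
    (fun x hx => (hy x hx.1).mono (Ici_subset_Ici.2 hx.1)) hinit (fun x _ hlt => ?_) ⟨ht, le_rfl⟩
  have hcube := (hsym x).sq_trace_pow_three_le (htr x)
  rw [pow_two (Q x), pow_three' (Q x)] at hcube
  linarith [neg_mul_add_mul_sub_mul_sq_nonpos hb hc.le hroot hbs hcube hlt]
end

section
/- Let U ⊂ ℝ² be open, let n : U → ℝ² be continuously differentiable with |n(x)| = 1 for all x ∈ U, let s ∈ ℝ, and define Q(x) = s( n(x) ⊗ n(x) − I/2 ). Then at every point of U, the elastic density satisfies L1|∇Q|² + L2 ∂_jQ_{ik}∂_kQ_{ij} + L3 ∂_jQ_{ij}∂_kQ_{ik} + L4 Q_{lk}∂_lQ_{ij}∂_kQ_{ij} = K1 (div n)² + K3 (curl n)², where div n = ∂₁n₁ + ∂₂n₂, curl n = ∂₁n₂ − ∂₂n₁, K1 = (2L1 + L2 + L3)s² − L4 s³, and K3 = (2L1 + L2 +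 L3)s² + L4 s³. -/
open Set

noncomputable section

/-!
Differentiating `|n|² = 1` shows that every partial derivative `∂_k n` is orthogonal to `n`, hence
`∂_k n = t_k n^⊥` with `n^⊥ = (-n₂, n₁)`. Then `div n = n^⊥ · t` and `curl n = n · t`, the
derivatives of `Q` are `s t_k (n^⊥ ⊗ n + n ⊗ n^⊥)`, and the elastic density becomes a polynomial
in `n, t` which agrees with `K1 (div n)² + K3 (curl n)²` modulo `|n|² = 1`.
-/

open Filter Topology InnerProductSpace

theorem inner_fderiv_eq_zero_of_norm_eventuallyEq {G F : Type*} [NormedAddCommGroup G]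
    [NormedSpace ℝ G] [NormedAddCommGroup F] [InnerProductSpace ℝ F] {f : G → F} {x : G} {r : ℝ}
    (hf : DifferentiableAt ℝ f x) (hr : ∀ᶠ y in 𝓝 x, ‖f y‖ = r) (v : G) :
    ⟪f x, fderiv ℝ f x v⟫_ℝ = 0 := by
  have hconst : HasFDerivAt (‖f ·‖ ^ 2) (0 : G →L[ℝ] ℝ) x :=
    (hasFDerivAt_const (r ^ 2) x).congr_of_eventuallyEq (hr.mono fun y hy => by simp [hy])
  simpa using congrArg (· v) (hf.hasFDerivAt.norm_sq.unique hconst)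

theorem pd_component {n : E2 → E2} {x : E2} (hn : DifferentiableAt ℝ n x) (k i : Fin 2) :
    pd k (fun y => n y i) x = fderiv ℝ n x (EuclideanSpace.single k 1) i :=
  congrArg (· (EuclideanSpace.single k 1))
    ((EuclideanSpace.proj (𝕜 := ℝ) i).hasFDerivAt.comp x hn.hasFDerivAt).fderiv

theorem pd_mul {f g : E2 → ℝ} {x : E2} (hf : DifferentiableAt ℝ f x)
    (hg : DifferentiableAt ℝ g x) (k : Fin 2) :
    pd k (fun y => f y * g y) x = pd k f x * g x + f x * pd k g x := by
  simp only [pd, fderiv_fun_mul hf hg, add_apply, smul_apply, smul_eq_mul]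
  ring

theorem pd_const_mul (c : ℝ) (f : E2 → ℝ) (x : E2) (k : Fin 2) :
    pd k (fun y => c * f y) x = c * pd k f x := by
  rw [pd, show (fun y => c * f y) = c • f from rfl, fderiv_const_smul_field]
  rfl

theorem pd_sub_const (f : E2 → ℝ) (c : ℝ) (x : E2) (k : Fin 2) :
    pd k (fun y => f y - c) x = pd k f x := by
  simp only [pd, fderiv_sub_const]

theorem sum_mul_pd_eq_zero_of_norm_eventuallyEq {n : E2 → E2} {x : E2} {r : ℝ}
    (hn : DifferentiableAt ℝ n x) (hr : ∀ᶠ y in 𝓝 x, ‖n y‖ = r) (k : Fin 2) :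
    ∑ i, n x i * pd k (fun y => n y i) x = 0 := by
  simpa [PiLp.inner_apply, pd_component hn, mul_comm] using
    inner_fderiv_eq_zero_of_norm_eventuallyEq hn hr (EuclideanSpace.single k 1)

/-- `dQ k` stands for `∂_k Q`. -/
def elasticDensity {ι : Type*} [Fintype ι] (L1 L2 L3 L4 : ℝ) (Q : Matrix ι ι ℝ)
    (dQ : ι → Matrix ι ι ℝ) : ℝ :=
  L1 * (∑ k, ∑ i, ∑ j, (dQ k i j) ^ 2)
    + L2 * (∑ i, ∑ j, ∑ k, dQ j i k * dQ k i j)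
    + L3 * (∑ i, (∑ j, dQ j i j) * (∑ k, dQ k i k))
    + L4 * (∑ l, ∑ k, Q l k * (∑ i, ∑ j, dQ l i j * dQ k i j))

theorem elasticDensity_uniaxial {m : Fin 2 → ℝ} {D : Fin 2 → Fin 2 → ℝ}
    (hm : ∑ i, m i ^ 2 = 1) (hD : ∀ k, ∑ i, m i * D k i = 0) (s L1 L2 L3 L4 : ℝ) :
    elasticDensity L1 L2 L3 L4
        (Matrix.of fun i j => s * (m i * m j - if i = j then 1 / 2 else 0))
        (fun k => Matrix.of fun i j => s * (D k i * m j + m i * D k j))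
      = ((2 * L1 + L2 + L3) * s ^ 2 - L4 * s ^ 3) * (D 0 0 + D 1 1) ^ 2
        + ((2 * L1 + L2 + L3) * s ^ 2 + L4 * s ^ 3) * (D 0 1 - D 1 0) ^ 2 := by
  simp only [Fin.sum_univ_two] at hm hD
  obtain ⟨t, hDt⟩ : ∃ t : Fin 2 → ℝ, ∀ k, D k 0 = -m 1 * t k ∧ D k 1 = m 0 * t k :=
    ⟨fun k => m 0 * D k 1 - m 1 * D k 0, fun k =>
      ⟨by linear_combination m 0 * hD k - D k 0 * hm,
        by linear_combination m 1 * hD k - D k 1 * hm⟩⟩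
  simp only [elasticDensity, Matrix.of_apply, Fin.sum_univ_two, (hDt _).1, (hDt _).2,
    ↓reduceIte, zero_ne_one, one_ne_zero]
  linear_combination ((2 * L1 + L2 + L3) * s ^ 2 * (t 0 ^ 2 + t 1 ^ 2) * (m 0 ^ 2 + m 1 ^ 2)
    + L4 * s ^ 3 * (2 * (m 0 * t 0 + m 1 * t 1) ^ 2 * (m 0 ^ 2 + m 1 ^ 2 + 1)
      - (m 0 ^ 2 + m 1 ^ 2) * (t 0 ^ 2 + t 1 ^ 2))) * hm

/-- Appendix B: reduction of the four-constant Landau–de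
Gennes elastic energy to the 2D Oseen–Frank energy. For a unit director field
`n` and `Q = s(n ⊗ n − I/2)`, the elastic density equals
`K1 (div n)² + K3 (curl n)²` with `K1 = (2L1+L2+L3)s² − L4 s³` and
`K3 = (2L1+L2+L3)s² + L4 s³`. -/
theorem oseen_frank_reduction
    (U : Set E2) (hU : IsOpen U)
    (n : E2 → E2) (hn : ContDiffOn ℝ 1 n U)
    (hunit : ∀ x ∈ U, ‖n x‖ = 1)
    (s L1 L2 L3 L4 : ℝ)
    (Q : E2 → Matrix (Fin 2) (Fin 2) ℝ)
    (hQ : ∀ (x : E2) (i j : Fin 2),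
      Q x i j = s * (n x i * n x j - if i = j then 1 / 2 else 0))
    (K1 K3 : ℝ)
    (hK1 : K1 = (2 * L1 + L2 + L3) * s ^ 2 - L4 * s ^ 3)
    (hK3 : K3 = (2 * L1 + L2 + L3) * s ^ 2 + L4 * s ^ 3) :
    ∀ x ∈ U,
      L1 * (∑ k, ∑ i, ∑ j, (pd k (fun y => Q y i j) x) ^ 2)
        + L2 * (∑ i, ∑ j, ∑ k, pd j (fun y => Q y i k) x * pd k (fun y => Q y i j) x)
        + L3 * (∑ i, (∑ j, pd j (fun y => Q y i j) x) * (∑ k, pd k (fun y => Q y i k) x))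
        + L4 * (∑ l, ∑ k, Q x l k *
            (∑ i, ∑ j, pd l (fun y => Q y i j) x * pd k (fun y => Q y i j) x))
      = K1 * (pd 0 (fun y => n y 0) x + pd 1 (fun y => n y 1) x) ^ 2
        + K3 * (pd 0 (fun y => n y 1) x - pd 1 (fun y => n y 0) x) ^ 2 := by
  intro x hx
  have hdn : DifferentiableAt ℝ n x :=
    (hn.contDiffAt (hU.mem_nhds hx)).differentiableAt one_ne_zero
  have hdn_coord (i : Fin 2) : DifferentiableAt ℝ (fun y => n y i) x :=
    (EuclideanSpace.proj (𝕜 := ℝ) i).differentiableAt.comp x hdn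
  have hunit_near : ∀ᶠ y in 𝓝 x, ‖n y‖ = 1 := eventually_of_mem (hU.mem_nhds hx) hunit
  have hm : ∑ i, n x i ^ 2 = 1 := by
    rw [← EuclideanSpace.real_norm_sq_eq, hunit x hx, one_pow]
  have hQx : Q x = Matrix.of fun i j => s * (n x i * n x j - if i = j then 1 / 2 else 0) :=
    Matrix.ext (hQ x)
  have hdQ : (fun k => Matrix.of fun i j => pd k (fun y => Q y i j) x) = fun k =>
      Matrix.of fun i j => s * (pd k (fun y => n y i) x * n x j + n x i * pd k (fun y => n y j) x) := by
    ext k i j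
    simp only [Matrix.of_apply, hQ, pd_const_mul, pd_sub_const, pd_mul (hdn_coord i) (hdn_coord j)]
  change elasticDensity L1 L2 L3 L4 (Q x)
    (fun k => Matrix.of fun i j => pd k (fun y => Q y i j) x) = _
  rw [hQx, hdQ, hK1, hK3,
    elasticDensity_uniaxial hm (sum_mul_pd_eq_zero_of_norm_eventuallyEq hdn hunit_near)]

end
end
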